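/- With notation as above, if x_ball is uniformly distributed on the closed unit ball of ℝⁿ, then C L x_ball + x_c is uniformly distributed on the informed set X_f̂ = {x : ‖x_start − x‖ + ‖x − x_goal‖ ≤ c}. -/

import Mathlib

/-!
The affine map `y ↦ C L y + x_c` carries the closed unit ball exactly onto the informed set.
Undoing the rotation `C` and the translation by `x_c` moves the foci to `∓ (c_min / 2) e₀`, and for
`a = c / 2`, `b = √(c² − c_min²) / 2` (so `a² = b² + (c_min / 2)²`) the focal-distance sum of
`L y` is at most `2a = c` exactly when `‖y‖ ≤ 1`. An affine map with nonzero determinant pushes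
Lebesgue measure to a constant multiple of itself, and conditioning on a set commutes with such a
pushforward, so the uniform law on the ball goes to the uniform law on the informed set.
-/

open MeasureTheory Metric Matrix ProbabilityTheory
open scoped ENNReal

theorem sqrt_add_sqrt_le_two_mul_iff {a b f s w : ℝ} (ha : 0 < a) (hb : 0 < b)
    (habf : a ^ 2 = b ^ 2 + f ^ 2) (hw : 0 ≤ w) :
    √((a * s + f) ^ 2 + b ^ 2 * w) + √((a * s - f) ^ 2 + b ^ 2 * w) ≤ 2 * a ↔ s ^ 2 + w ≤ 1 := by
  -- Both squared focal distances exceed the squares of `a ± f s` (which sum to `2a`) by the same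
  -- quantity `b² (s² + w − 1)`; its sign decides the inequality.
  have hp : (a * s + f) ^ 2 + b ^ 2 * w = (a + f * s) ^ 2 + b ^ 2 * (s ^ 2 + w - 1) := by
    linear_combination (s ^ 2 - 1) * habf
  have hq : (a * s - f) ^ 2 + b ^ 2 * w = (a - f * s) ^ 2 + b ^ 2 * (s ^ 2 + w - 1) := by
    linear_combination (s ^ 2 - 1) * habf
  constructor
  · intro h
    by_contra! hout
    have hE : 0 < b ^ 2 * (s ^ 2 + w - 1) := mul_pos (by positivity) (by linarith)
    have h1 : a + f * s < √((a * s + f) ^ 2 + b ^ 2 * w) := Real.lt_sqrt_of_sq_lt (by linarith)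
    have h2 : a - f * s < √((a * s - f) ^ 2 + b ^ 2 * w) := Real.lt_sqrt_of_sq_lt (by linarith)
    linarith
  · intro h
    have hE : b ^ 2 * (s ^ 2 + w - 1) ≤ 0 :=
      mul_nonpos_of_nonneg_of_nonpos (by positivity) (by linarith)
    obtain ⟨hfs, hfs'⟩ := abs_le_of_sq_le_sq' (a := f * s) (b := a) (by nlinarith) ha.le
    have h1 : √((a * s + f) ^ 2 + b ^ 2 * w) ≤ a + f * s :=
      Real.sqrt_le_iff.mpr ⟨by linarith, by linarith⟩
    have h2 : √((a * s - f) ^ 2 + b ^ 2 * w) ≤ a - f * s :=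
      Real.sqrt_le_iff.mpr ⟨by linarith, by linarith⟩
    linarith

theorem norm_toEuclideanLin_of_mem_unitaryGroup {𝕜 ι : Type*} [RCLike 𝕜] [Fintype ι]
    [DecidableEq ι] {U : Matrix ι ι 𝕜} (hU : U ∈ unitaryGroup ι 𝕜) (x : EuclideanSpace 𝕜 ι) :
    ‖toEuclideanLin U x‖ = ‖x‖ := by
  rw [← coe_toEuclideanCLM_eq_toEuclideanLin, ContinuousLinearMap.coe_coe]
  exact ContinuousLinearMap.norm_map_of_mem_unitary (Unitary.map_mem toEuclideanCLM hU) x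

section
variable {ι : Type*} [Fintype ι] [DecidableEq ι]

theorem norm_sq_toEuclideanLin_diagonal_add_single (i₀ : ι) (a b t : ℝ) (y : EuclideanSpace ℝ ι) :
    ‖toEuclideanLin (diagonal fun i => if i = i₀ then a else b) y +
        EuclideanSpace.single i₀ t‖ ^ 2 = (a * y i₀ + t) ^ 2 + b ^ 2 * (‖y‖ ^ 2 - y i₀ ^ 2) := by
  simp only [EuclideanSpace.real_norm_sq_eq, ← Finset.add_sum_erase _ _ (Finset.mem_univ i₀),
    add_sub_cancel_left, Finset.mul_sum]
  congr 1
  · simp [mulVec_diagonal]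
  · refine Finset.sum_congr rfl fun i hi => ?_
    simp [mulVec_diagonal, Finset.ne_of_mem_erase hi, mul_pow]

theorem preimage_informedSet_eq_closedBall {i₀ : ι} {xstart xgoal : EuclideanSpace ℝ ι}
    {cmin c : ℝ} (hpos : 0 < cmin) (hc : cmin < c) {C : Matrix ι ι ℝ}
    (hC : C ∈ orthogonalGroup ι ℝ) (hcol : ∀ i, C i i₀ = (xgoal i - xstart i) / cmin) :
    (fun y => toEuclideanLin C (toEuclideanLin
        (diagonal fun i => if i = i₀ then c / 2 else √(c ^ 2 - cmin ^ 2) / 2) y) +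
        (2 : ℝ)⁻¹ • (xstart + xgoal)) ⁻¹' {x | ‖xstart - x‖ + ‖x - xgoal‖ ≤ c} =
      closedBall 0 1 := by
  set a := c / 2 with ha
  set b := √(c ^ 2 - cmin ^ 2) / 2 with hb
  set f := cmin / 2 with hf
  set D := diagonal fun i => if i = i₀ then a else b
  have ha_pos : 0 < a := by linarith
  have hb_pos : 0 < b := by
    have : 0 < c ^ 2 - cmin ^ 2 := by nlinarith
    positivity
  have habf : a ^ 2 = b ^ 2 + f ^ 2 := by
    rw [ha, hb, hf, div_pow, div_pow, Real.sq_sqrt (by nlinarith : 0 ≤ c ^ 2 - cmin ^ 2)]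
    ring
  have hsingle : ∀ t, toEuclideanLin C (EuclideanSpace.single i₀ t) =
      (t / cmin) • (xgoal - xstart) := by
    intro t
    ext i
    simp [hcol]
    ring
  ext y
  have hstart : xstart - (toEuclideanLin C (toEuclideanLin D y) +
      (2 : ℝ)⁻¹ • (xstart + xgoal)) =
      -toEuclideanLin C (toEuclideanLin D y + EuclideanSpace.single i₀ f) := by
    rw [map_add, hsingle, show f / cmin = 2⁻¹ by rw [hf]; field_simp]
    module
  have hgoal : toEuclideanLin C (toEuclideanLin D y) +
      (2 : ℝ)⁻¹ • (xstart + xgoal) - xgoal =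
      toEuclideanLin C (toEuclideanLin D y + EuclideanSpace.single i₀ (-f)) := by
    rw [map_add, hsingle, show -f / cmin = -2⁻¹ by rw [hf]; field_simp]
    module
  have hw : 0 ≤ ‖y‖ ^ 2 - y i₀ ^ 2 := by
    have := pow_le_pow_left₀ (norm_nonneg _) (PiLp.norm_apply_le y i₀) 2
    rw [Real.norm_eq_abs, sq_abs] at this
    linarith
  simp only [Set.mem_preimage, Set.mem_ofPred_eq, mem_closedBall, dist_zero_right]
  rw [hstart, hgoal, norm_neg, norm_toEuclideanLin_of_mem_unitaryGroup hC,
    norm_toEuclideanLin_of_mem_unitaryGroup hC, ← Real.sqrt_sq (norm_nonneg (_ + _)),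
    ← Real.sqrt_sq (norm_nonneg (_ + EuclideanSpace.single i₀ (-f))),
    norm_sq_toEuclideanLin_diagonal_add_single, norm_sq_toEuclideanLin_diagonal_add_single,
    ← sub_eq_add_neg, show c = 2 * a by ring,
    sqrt_add_sqrt_le_two_mul_iff ha_pos hb_pos habf hw, add_sub_cancel,
    sq_le_one_iff₀ (norm_nonneg _)]

end

theorem map_cond_preimage_of_map_eq_smul {α β : Type*} [MeasurableSpace α] [MeasurableSpace β]
    {μ : Measure α} {ν : Measure β} {φ : α → β} (hφ : Measurable φ) {k : ℝ≥0∞} (hk0 : k ≠ 0)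
    (hk : k ≠ ∞) (hmap : μ.map φ = k • ν) {t : Set β} (ht : MeasurableSet t) :
    (μ[|φ ⁻¹' t]).map φ = ν[|t] := by
  have hpre : μ (φ ⁻¹' t) = k * ν t := by
    rw [← Measure.map_apply hφ ht, hmap, Measure.smul_apply, smul_eq_mul]
  rw [ProbabilityTheory.cond, ProbabilityTheory.cond, Measure.map_smul,
    ← Measure.restrict_map hφ ht, hmap, Measure.restrict_smul, smul_smul, hpre,
    ENNReal.mul_inv (.inl hk0) (.inl hk), mul_right_comm, ENNReal.inv_mul_cancel hk0 hk, one_mul]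

theorem map_linearMap_add_addHaar_eq_smul_addHaar {E : Type*} [NormedAddCommGroup E]
    [NormedSpace ℝ E] [MeasurableSpace E] [BorelSpace E] [FiniteDimensional ℝ E] (μ : Measure E)
    [μ.IsAddHaarMeasure] {L : E →ₗ[ℝ] E} (hL : LinearMap.det L ≠ 0) (v : E) :
    μ.map (fun x => L x + v) = ENNReal.ofReal |(LinearMap.det L)⁻¹| • μ := by
  change μ.map ((· + v) ∘ L) = _
  rw [← Measure.map_map (measurable_add_const v) L.continuous_of_finiteDimensional.measurable,
    Measure.map_linearMap_addHaar_eq_smul_addHaar μ hL, Measure.map_smul, map_add_right_eq_self]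

theorem map_cond_preimage_linearMap_add {E : Type*} [NormedAddCommGroup E] [NormedSpace ℝ E]
    [MeasurableSpace E] [BorelSpace E] [FiniteDimensional ℝ E] (μ : Measure E)
    [μ.IsAddHaarMeasure] {L : E →ₗ[ℝ] E} (hL : LinearMap.det L ≠ 0) (v : E) {t : Set E}
    (ht : MeasurableSet t) :
    (μ[|(fun x => L x + v) ⁻¹' t]).map (fun x => L x + v) = μ[|t] :=
  map_cond_preimage_of_map_eq_smul
    (L.continuous_of_finiteDimensional.add continuous_const).measurable (by simpa using hL)
    ENNReal.ofReal_ne_top (map_linearMap_add_addHaar_eq_smul_addHaar μ hL v) ht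

theorem stmt_16_general (n : ℕ) [NeZero n] (xstart xgoal : EuclideanSpace ℝ (Fin n)) (cmin c : ℝ)
    (hpos : 0 < cmin) (hc : cmin < c)
    (C : Matrix (Fin n) (Fin n) ℝ) (hC : C ∈ Matrix.orthogonalGroup (Fin n) ℝ)
    (hcol : ∀ i, C i 0 = (xgoal i - xstart i) / cmin) :
    Measure.map
        (fun x : EuclideanSpace ℝ (Fin n) =>
          (WithLp.equiv 2 (Fin n → ℝ)).symm
            (C.mulVec ((Matrix.diagonal fun i : Fin n =>
              if i = 0 then c / 2 else Real.sqrt (c ^ 2 - cmin ^ 2) / 2).mulVec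
              (WithLp.equiv 2 (Fin n → ℝ) x)))
            + (2 : ℝ)⁻¹ • (xstart + xgoal))
        ((volume (closedBall (0 : EuclideanSpace ℝ (Fin n)) 1))⁻¹ •
          volume.restrict (closedBall (0 : EuclideanSpace ℝ (Fin n)) 1)) =
      (volume {x : EuclideanSpace ℝ (Fin n) | ‖xstart - x‖ + ‖x - xgoal‖ ≤ c})⁻¹ •
        volume.restrict {x : EuclideanSpace ℝ (Fin n) | ‖xstart - x‖ + ‖x - xgoal‖ ≤ c} := by
  set D : Matrix (Fin n) (Fin n) ℝ :=
    diagonal fun i => if i = 0 then c / 2 else √(c ^ 2 - cmin ^ 2) / 2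
  have hdetD : D.det ≠ 0 := by
    have : 0 < c := by linarith
    have : 0 < √(c ^ 2 - cmin ^ 2) := Real.sqrt_pos.mpr (by nlinarith)
    rw [det_diagonal, Finset.prod_ne_zero_iff]
    intro i _
    split_ifs <;> positivity
  have hdetL : LinearMap.det (toEuclideanLin C ∘ₗ toEuclideanLin D) ≠ 0 := by
    rw [LinearMap.det_comp, LinearMap.det_toLpLin, LinearMap.det_toLpLin]
    exact mul_ne_zero (isUnit_det_of_left_inverse hC.1).ne_zero hdetD
  have hS : MeasurableSet {x : EuclideanSpace ℝ (Fin n) | ‖xstart - x‖ + ‖x - xgoal‖ ≤ c} :=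
    (isClosed_le (by fun_prop) continuous_const).measurableSet
  rw [← preimage_informedSet_eq_closedBall hpos hc hC hcol]
  exact map_cond_preimage_linearMap_add volume hdetL _ hS

/-- If `x_ball` is uniformly distributed on the closed unit ball of ℝⁿ, then
`C L x_ball + x_c` is uniformly distributed on the informed set
`X_f̂ = {x : ‖x_start − x‖ + ‖x − x_goal‖ ≤ c}`. -/
theorem stmt_16 (n : ℕ) [NeZero n] (xstart xgoal : EuclideanSpace ℝ (Fin n)) (cmin c : ℝ)
    (hmin : cmin = ‖xgoal - xstart‖) (hpos : 0 < cmin) (hc : cmin < c)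
    (C : Matrix (Fin n) (Fin n) ℝ) (hC : C ∈ Matrix.orthogonalGroup (Fin n) ℝ)
    (hdet : C.det = 1) (hcol : ∀ i, C i 0 = (xgoal i - xstart i) / cmin) :
    Measure.map
        (fun x : EuclideanSpace ℝ (Fin n) =>
          (WithLp.equiv 2 (Fin n → ℝ)).symm
            (C.mulVec ((Matrix.diagonal fun i : Fin n =>
              if i = 0 then c / 2 else Real.sqrt (c ^ 2 - cmin ^ 2) / 2).mulVec
              (WithLp.equiv 2 (Fin n → ℝ) x)))
            + (2 : ℝ)⁻¹ • (xstart + xgoal))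
        ((volume (closedBall (0 : EuclideanSpace ℝ (Fin n)) 1))⁻¹ •
          volume.restrict (closedBall (0 : EuclideanSpace ℝ (Fin n)) 1)) =
      (volume {x : EuclideanSpace ℝ (Fin n) | ‖xstart - x‖ + ‖x - xgoal‖ ≤ c})⁻¹ •
        volume.restrict {x : EuclideanSpace ℝ (Fin n) | ‖xstart - x‖ + ‖x - xgoal‖ ≤ c} :=
  stmt_16_general n xstart xgoal cmin c hpos hc C hC hcol
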